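/- arXiv:1306.4352 — 5 statements merged into one kernel-verified Lean document; each statement's English description precedes it below -/
import Mathlib

section
/- Bound on the pureness of the final state: for any state ρ_S on C^{d_S}, any Hamiltonian H on C^d with thermal state ρ_R = e^{−βH}/tr(e^{−βH}) at β ≥ 0, and any unitary U on C^{d_S} ⊗ C^d, the final system state ρ'_S = tr_R[U(ρ_S ⊗ ρ_R)U†] satisfies λ_min(ρ'_S) ≥ e^{−β(H_max − H_min)} λ_min(ρ_S), where H_min, H_max are the minimal and maximal eigenvalues of H and λ_min denotes the smallest eigenvalue. -/
/-! In the Loewner order, `ρ_S ≥ λ_min(ρ_S) • 1` and, since the eigenvalues of `e^{-βH}` lie in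
`[e^{-βH_max}, e^{-βH_min}]` and the partition function is at most `d e^{-βH_min}`,
`ρ_R ≥ e^{-β(H_max - H_min)} / d • 1`. Hence
`ρ_S ⊗ ρ_R ≥ e^{-β(H_max - H_min)} λ_min(ρ_S) / d • 1`. Conjugation by a unitary preserves the order
and fixes scalars, and the partial trace is a positive map sending `1` to `d • 1`, so
`tr_R ρ' ≥ e^{-β(H_max - H_min)} λ_min(ρ_S) • 1`. -/

open scoped Kronecker ComplexOrder
open Matrix

noncomputable def matfun {n : Type*} [Fintype n] [DecidableEq n] (f : ℝ → ℝ)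
    (A : Matrix n n ℂ) : Matrix n n ℂ :=
  if h : A.IsHermitian then
    (h.eigenvectorUnitary : Matrix n n ℂ) * Matrix.diagonal (fun i => (f (h.eigenvalues i) : ℂ)) *
      (star (h.eigenvectorUnitary : Matrix n n ℂ))
  else 0

noncomputable def mlog {n : Type*} [Fintype n] [DecidableEq n] (A : Matrix n n ℂ) : Matrix n n ℂ :=
  matfun Real.log A

noncomputable def mexp {n : Type*} [Fintype n] [DecidableEq n] (β : ℝ) (H : Matrix n n ℂ) : Matrix n n ℂ :=
  matfun (fun x => Real.exp (-β * x)) H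

noncomputable def gibbs {n : Type*} [Fintype n] [DecidableEq n] (β : ℝ) (H : Matrix n n ℂ) : Matrix n n ℂ :=
  ((mexp β H).trace)⁻¹ • mexp β H

noncomputable def entropy {n : Type*} [Fintype n] [DecidableEq n] (ρ : Matrix n n ℂ) : ℝ :=
  -((ρ * mlog ρ).trace).re

noncomputable def relEnt {n : Type*} [Fintype n] [DecidableEq n] (σ ρ : Matrix n n ℂ) : ℝ :=
  ((σ * (mlog σ - mlog ρ)).trace).re

def IsState {n : Type*} [Fintype n] (ρ : Matrix n n ℂ) : Prop := ρ.PosSemidef ∧ ρ.trace = 1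

noncomputable def trR {a b : Type*} [Fintype a] [Fintype b]
    (ρ : Matrix (a × b) (a × b) ℂ) : Matrix a a ℂ :=
  Matrix.of fun i j => ∑ k, ρ (i, k) (j, k)

noncomputable def trL {a b : Type*} [Fintype a] [Fintype b]
    (ρ : Matrix (a × b) (a × b) ℂ) : Matrix b b ℂ :=
  Matrix.of fun i j => ∑ k, ρ (k, i) (k, j)

noncomputable def mutInfo {a b : Type*} [Fintype a] [Fintype b] [DecidableEq a] [DecidableEq b]
    (ρ : Matrix (a × b) (a × b) ℂ) : ℝ :=
  entropy (trR ρ) + entropy (trL ρ) - entropy ρ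


noncomputable def lammin {n : Type*} [Fintype n] [DecidableEq n] [Nonempty n]
    (A : Matrix n n ℂ) : ℝ :=
  if h : A.IsHermitian then ⨅ i, h.eigenvalues i else 0

open scoped MatrixOrder

theorem algebraMap_le_conj_of_mem_unitary {R A : Type*} [CommSemiring R] [Ring A] [PartialOrder A]
    [StarRing A] [StarOrderedRing A] [Algebra R A] {a u : A} {c : R} (hu : u ∈ unitary A)
    (h : algebraMap R A c ≤ a) : algebraMap R A c ≤ u * a * star u :=
  calc algebraMap R A c = u * algebraMap R A c * star u := by
        rw [← Algebra.commutes, mul_assoc, Unitary.mul_star_self_of_mem hu, mul_one]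
    _ ≤ u * a * star u := star_right_conjugate_le_conjugate h u

namespace Matrix

variable {𝕜 n : Type*} [RCLike 𝕜] [Fintype n]

theorem trace_mono {A B : Matrix n n 𝕜} (h : A ≤ B) : A.trace ≤ B.trace := by
  simpa [trace_sub, sub_nonneg] using (le_iff.1 h).trace_nonneg

theorem trace_algebraMap [DecidableEq n] (c : ℝ) :
    (algebraMap ℝ (Matrix n n 𝕜) c).trace = (Fintype.card n * c : ℝ) := by
  simp [algebraMap_eq_diagonal, trace_diagonal]

theorem algebraMap_mul_le_kronecker {m : Type*} [Fintype m] [DecidableEq m] [DecidableEq n]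
    {A : Matrix m m 𝕜} {B : Matrix n n 𝕜} {a b : ℝ} (ha : 0 ≤ a) (hb : 0 ≤ b)
    (hA : algebraMap ℝ _ a ≤ A) (hB : algebraMap ℝ _ b ≤ B) :
    algebraMap ℝ _ (a * b) ≤ A ⊗ₖ B := by
  have hB₀ : 0 ≤ B := (algebraMap_nonneg _ hb).trans hB
  have hsplit : A ⊗ₖ B - algebraMap ℝ _ (a * b) =
      (A - algebraMap ℝ _ a) ⊗ₖ B + a • (1 ⊗ₖ (B - algebraMap ℝ _ b)) := by
    ext ⟨i, j⟩ ⟨k, l⟩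
    simp only [Algebra.algebraMap_eq_smul_one, sub_apply, add_apply, smul_apply,
      kroneckerMap_apply, one_apply, Prod.mk.injEq]
    rcases eq_or_ne i k with rfl | hik <;> rcases eq_or_ne j l with rfl | hjl <;>
      simp [*, RCLike.real_smul_eq_coe_mul] <;> ring
  rw [le_iff, hsplit]
  exact ((le_iff.1 hA).kronecker hB₀.posSemidef).add
    ((PosSemidef.one.kronecker (le_iff.1 hB)).smul ha)

end Matrix

section

variable {n : Type*} [Fintype n] [DecidableEq n]

theorem matfun_eq_cfc {A : Matrix n n ℂ} (hA : A.IsHermitian) (f : ℝ → ℝ) :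
    matfun f A = cfc f A := by
  rw [hA.cfc_eq, IsHermitian.cfc, matfun, dif_pos hA, Unitary.conjStarAlgAut_apply]
  rfl

theorem le_lammin_iff [Nonempty n] {A : Matrix n n ℂ} (hA : A.IsHermitian) {c : ℝ} :
    c ≤ lammin A ↔ algebraMap ℝ _ c ≤ A := by
  rw [algebraMap_le_iff_le_spectrum (ha := hA.isSelfAdjoint),
    hA.spectrum_real_eq_range_eigenvalues, lammin, dif_pos hA,
    le_ciInf_iff (Finite.bddBelow_range _)]
  simp

theorem le_lammin_of_algebraMap_le [Nonempty n] {A : Matrix n n ℂ} {c : ℝ}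
    (h : algebraMap ℝ _ c ≤ A) : c ≤ lammin A :=
  (le_lammin_iff (IsSelfAdjoint.of_ge h (IsSelfAdjoint.algebraMap _ (.all c)))).2 h

theorem algebraMap_le_trace_inv_smul [Nonempty n] {M : Matrix n n ℂ} {lo hi : ℝ} (hlo : 0 < lo)
    (hM_lo : algebraMap ℝ _ lo ≤ M) (hM_hi : M ≤ algebraMap ℝ _ hi) :
    algebraMap ℝ _ (lo / (Fintype.card n * hi)) ≤ M.trace⁻¹ • M := by
  have htr_lo := trace_mono hM_lo
  have htr_hi := trace_mono hM_hi
  rw [trace_algebraMap] at htr_lo htr_hi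
  -- a complex number above a real one in `ComplexOrder` is real
  obtain ⟨z, hz⟩ : ∃ z : ℝ, M.trace = z :=
    ⟨M.trace.re, Complex.ext rfl (Complex.le_def.1 htr_lo).2.symm⟩
  rw [hz] at htr_lo htr_hi
  replace htr_lo := RCLike.ofReal_le_ofReal.1 htr_lo
  replace htr_hi := RCLike.ofReal_le_ofReal.1 htr_hi
  have hz_pos : 0 < z := lt_of_lt_of_le (by positivity) htr_lo
  calc algebraMap ℝ _ (lo / (Fintype.card n * hi))
      ≤ algebraMap ℝ _ (z⁻¹ * lo) := by
        apply algebraMap_mono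
        rw [div_eq_inv_mul]
        gcongr
    _ = z⁻¹ • algebraMap ℝ _ lo := by
        rw [map_mul, Algebra.algebraMap_eq_smul_one z⁻¹, smul_one_mul]
    _ ≤ z⁻¹ • M := smul_le_smul_of_nonneg_left hM_lo (by positivity)
    _ = M.trace⁻¹ • M := by rw [hz, ← Complex.ofReal_inv, Complex.coe_smul]

theorem algebraMap_le_gibbs [Nonempty n] {H : Matrix n n ℂ} (hH : H.IsHermitian) {β : ℝ}
    (hβ : 0 ≤ β) :
    algebraMap ℝ _ (Real.exp (-β * ((⨆ i, hH.eigenvalues i) - ⨅ i, hH.eigenvalues i)) /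
      Fintype.card n) ≤ gibbs β H := by
  set Hmax := ⨆ i, hH.eigenvalues i
  set Hmin := ⨅ i, hH.eigenvalues i
  have hspec : ∀ x ∈ spectrum ℝ H, Hmin ≤ x ∧ x ≤ Hmax := by
    rw [hH.spectrum_real_eq_range_eigenvalues]
    rintro - ⟨i, rfl⟩
    exact ⟨ciInf_le (Finite.bddBelow_range _) i, le_ciSup (Finite.bddAbove_range _) i⟩
  have hlo : algebraMap ℝ _ (Real.exp (-β * Hmax)) ≤ mexp β H := by
    rw [mexp, matfun_eq_cfc hH]
    refine algebraMap_le_cfc _ _ H fun x hx => ?_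
    exact Real.exp_le_exp.2 (mul_le_mul_of_nonpos_left (hspec x hx).2 (neg_nonpos.2 hβ))
  have hhi : mexp β H ≤ algebraMap ℝ _ (Real.exp (-β * Hmin)) := by
    rw [mexp, matfun_eq_cfc hH]
    refine cfc_le_algebraMap _ _ H fun x hx => ?_
    exact Real.exp_le_exp.2 (mul_le_mul_of_nonpos_left (hspec x hx).1 (neg_nonpos.2 hβ))
  rw [gibbs]
  convert algebraMap_le_trace_inv_smul (Real.exp_pos _) hlo hhi using 2
  rw [mul_sub, Real.exp_sub, div_div, mul_comm (Real.exp _)]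

end

section

variable {a b : Type*} [Fintype a] [Fintype b]

theorem trR_eq_sum_submatrix (ρ : Matrix (a × b) (a × b) ℂ) :
    trR ρ = ∑ k, ρ.submatrix (·, k) (·, k) := by
  ext i j
  simp [trR, Matrix.sum_apply]

theorem trR_sub (ρ σ : Matrix (a × b) (a × b) ℂ) : trR (ρ - σ) = trR ρ - trR σ := by
  ext i j
  simp [trR, Finset.sum_sub_distrib]

theorem trR_algebraMap [DecidableEq a] [DecidableEq b] (c : ℝ) :
    trR (algebraMap ℝ (Matrix (a × b) (a × b) ℂ) c) = algebraMap ℝ _ (Fintype.card b * c) := by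
  ext i j
  rcases eq_or_ne i j with rfl | hij <;> simp [trR, algebraMap_eq_diagonal, diagonal_apply, *]

theorem Matrix.PosSemidef.trR {ρ : Matrix (a × b) (a × b) ℂ} (hρ : ρ.PosSemidef) :
    (trR ρ).PosSemidef := by
  rw [trR_eq_sum_submatrix]
  exact posSemidef_sum _ fun k _ => hρ.submatrix _

theorem trR_mono {ρ σ : Matrix (a × b) (a × b) ℂ} (h : ρ ≤ σ) : trR ρ ≤ trR σ := by
  rw [le_iff, ← trR_sub]
  exact (le_iff.1 h).trR

end

theorem pureness_bound {dS d : ℕ} [NeZero dS] [NeZero d] (β : ℝ) (hβ : 0 ≤ β)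
    (H : Matrix (Fin d) (Fin d) ℂ) (hH : H.IsHermitian)
    (ρS : Matrix (Fin dS) (Fin dS) ℂ) (hS : IsState ρS)
    (U : Matrix (Fin dS × Fin d) (Fin dS × Fin d) ℂ)
    (hU : U ∈ Matrix.unitaryGroup (Fin dS × Fin d) ℂ) :
    let ρR := gibbs β H
    let ρ' := U * (ρS ⊗ₖ ρR) * star U
    let Hmin := ⨅ i, hH.eigenvalues i
    let Hmax := ⨆ i, hH.eigenvalues i
    Real.exp (-β * (Hmax - Hmin)) * lammin ρS ≤ lammin (trR ρ') := by
  intro ρR ρ' Hmin Hmax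
  set a := lammin ρS
  set b := Real.exp (-β * (Hmax - Hmin)) / d
  have ha : 0 ≤ a := (le_lammin_iff hS.1.isHermitian).2 (by simpa using hS.1.nonneg)
  have hρS : algebraMap ℝ _ a ≤ ρS := (le_lammin_iff hS.1.isHermitian).1 le_rfl
  have hρR : algebraMap ℝ _ b ≤ ρR := by
    simpa only [Fintype.card_fin] using algebraMap_le_gibbs hH hβ
  have hρ' : algebraMap ℝ _ (a * b) ≤ ρ' :=
    algebraMap_le_conj_of_mem_unitary hU (algebraMap_mul_le_kronecker ha (by positivity) hρS hρR)
  calc Real.exp (-β * (Hmax - Hmin)) * a = d * (a * b) := by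
        simp only [b]
        field_simp [NeZero.ne d]
    _ ≤ lammin (trR ρ') := by
        apply le_lammin_of_algebraMap_le
        simpa only [trR_algebraMap, Fintype.card_fin] using trR_mono hρ'
end

section
/- Entropy derivative of thermal states: for a Hermitian H on C^d, the entropy S(β) = −tr(ρ_β log ρ_β) of the thermal state ρ_β = e^{−βH}/tr(e^{−βH}) is differentiable in β ∈ ℝ with dS/dβ = −β·Var_β(H). -/
open scoped Kronecker ComplexOrder
open Matrix

noncomputable def thermalVar {d : ℕ} (H : Matrix (Fin d) (Fin d) ℂ) (β : ℝ) : ℝ :=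
  ((gibbs β H * (H - ((H * gibbs β H).trace) • (1 : Matrix (Fin d) (Fin d) ℂ)) ^ 2).trace).re

/-! In an eigenbasis of `H` everything is classical: `ρ_β` has eigenvalues
`pᵢ = exp (-β Eᵢ) / Z`. Since `-log pᵢ = β Eᵢ + log Z`, the entropy is `β U + log Z` with `U` the
mean energy, and `d(log Z)/dβ = -U`, so `dS/dβ = β dU/dβ`; the quotient rule gives
`dU/dβ = -(⟨E²⟩ - U²)`. -/

open Real

namespace Boltzmann

variable {ι : Type*} [Fintype ι] (E : ι → ℝ)

noncomputable def partitionFunction (β : ℝ) : ℝ := ∑ i, exp (-β * E i)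

noncomputable def prob (β : ℝ) (i : ι) : ℝ := exp (-β * E i) / partitionFunction E β

noncomputable def meanEnergy (β : ℝ) : ℝ := ∑ i, prob E β i * E i

noncomputable def energyVariance (β : ℝ) : ℝ :=
  ∑ i, prob E β i * (E i - meanEnergy E β) ^ 2

noncomputable def shannonEntropy (β : ℝ) : ℝ := ∑ i, negMulLog (prob E β i)

lemma partitionFunction_pos [Nonempty ι] (β : ℝ) : 0 < partitionFunction E β :=
  Finset.sum_pos (fun _ _ => exp_pos _) Finset.univ_nonempty

lemma sum_prob [Nonempty ι] (β : ℝ) : ∑ i, prob E β i = 1 := by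
  simp only [prob, ← Finset.sum_div]
  exact div_self (partitionFunction_pos E β).ne'

lemma sum_prob_mul (f : ι → ℝ) (β : ℝ) :
    ∑ i, prob E β i * f i = (∑ i, f i * exp (-β * E i)) / partitionFunction E β := by
  simp only [prob, Finset.sum_div]
  exact Finset.sum_congr rfl fun _ _ => by ring

lemma meanEnergy_eq_div (β : ℝ) :
    meanEnergy E β = (∑ i, E i * exp (-β * E i)) / partitionFunction E β :=
  sum_prob_mul E E β

lemma energyVariance_eq_sub_sq [Nonempty ι] (β : ℝ) :
    energyVariance E β = ∑ i, prob E β i * E i ^ 2 - meanEnergy E β ^ 2 := by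
  have hexpand : ∀ i, prob E β i * (E i - meanEnergy E β) ^ 2 =
      prob E β i * E i ^ 2 - 2 * meanEnergy E β * (prob E β i * E i)
        + meanEnergy E β ^ 2 * prob E β i := fun _ => by ring
  simp only [energyVariance, hexpand, Finset.sum_add_distrib, Finset.sum_sub_distrib,
    ← Finset.mul_sum, sum_prob]
  rw [← meanEnergy]
  ring

lemma hasDerivAt_sum_mul_exp (f : ι → ℝ) (β : ℝ) :
    HasDerivAt (fun b => ∑ i, f i * exp (-b * E i)) (-∑ i, f i * E i * exp (-β * E i)) β := by
  have hterm : ∀ i ∈ Finset.univ, HasDerivAt (fun b => f i * exp (-b * E i))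
      (-(f i * E i * exp (-β * E i))) β := fun i _ =>
    (((hasDerivAt_id β).neg.mul_const (E i)).exp.const_mul (f i)).congr_deriv <| by
      simp only [Pi.neg_apply, id_eq]
      ring
  simpa only [Finset.sum_neg_distrib] using HasDerivAt.fun_sum hterm

lemma hasDerivAt_partitionFunction (β : ℝ) :
    HasDerivAt (partitionFunction E) (-∑ i, E i * exp (-β * E i)) β := by
  have h := hasDerivAt_sum_mul_exp E (fun _ => 1) β
  simp only [one_mul] at h
  exact h

lemma hasDerivAt_meanEnergy [Nonempty ι] (β : ℝ) :
    HasDerivAt (meanEnergy E) (-energyVariance E β) β := by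
  have hZ := (partitionFunction_pos E β).ne'
  have h := (hasDerivAt_sum_mul_exp E E β).div (hasDerivAt_partitionFunction E β) hZ
  rw [funext (meanEnergy_eq_div E)]
  refine h.congr_deriv ?_
  rw [energyVariance_eq_sub_sq, meanEnergy_eq_div, sum_prob_mul]
  simp only [← pow_two]
  -- the sums are abstracted so that `field_simp` does not rewrite under their binders
  set N := ∑ i, E i * exp (-β * E i)
  set F := ∑ i, E i ^ 2 * exp (-β * E i)
  field_simp
  ring

lemma shannonEntropy_eq [Nonempty ι] (β : ℝ) :
    shannonEntropy E β = β * meanEnergy E β + log (partitionFunction E β) := by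
  have hZ := partitionFunction_pos E β
  have hterm : ∀ i, negMulLog (prob E β i) =
      β * (prob E β i * E i) + log (partitionFunction E β) * prob E β i := fun i => by
    rw [negMulLog, prob, log_div (exp_ne_zero _) hZ.ne', log_exp]
    ring
  simp only [shannonEntropy, hterm, Finset.sum_add_distrib, ← Finset.mul_sum, sum_prob]
  rw [← meanEnergy, mul_one]

theorem hasDerivAt_shannonEntropy (β : ℝ) :
    HasDerivAt (shannonEntropy E) (-β * energyVariance E β) β := by
  cases isEmpty_or_nonempty ι
  · have h0 : shannonEntropy E = fun _ => 0 := funext fun _ => by simp [shannonEntropy]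
    simpa [h0, energyVariance] using hasDerivAt_const β (0 : ℝ)
  have hZ := (partitionFunction_pos E β).ne'
  have h := ((hasDerivAt_id β).mul (hasDerivAt_meanEnergy E β)).add
    ((hasDerivAt_partitionFunction E β).log hZ)
  rw [funext (shannonEntropy_eq E)]
  refine h.congr_deriv ?_
  rw [meanEnergy_eq_div, id]
  set N := ∑ i, E i * exp (-β * E i)
  field_simp
  ring

end Boltzmann

namespace Matrix

variable {n : Type*} [Fintype n] [DecidableEq n] {A : Matrix n n ℂ}

lemma continuousOn_spectrum (f : ℝ → ℝ) (A : Matrix n n ℂ) : ContinuousOn f (spectrum ℝ A) :=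
  A.finite_real_spectrum.continuousOn f

namespace IsHermitian

lemma matfun_eq_cfc (hA : A.IsHermitian) (f : ℝ → ℝ) : matfun f A = cfc f A := by
  rw [hA.cfc_eq f, IsHermitian.cfc, matfun, dif_pos hA]
  rfl

lemma trace_cfc (hA : A.IsHermitian) (f : ℝ → ℝ) :
    (cfc f A).trace = ∑ i, (f (hA.eigenvalues i) : ℂ) := by
  rw [hA.cfc_eq f, IsHermitian.cfc, Unitary.conjStarAlgAut_apply, trace_mul_cycle,
    Unitary.coe_star_mul_self, one_mul, trace_diagonal]
  rfl

lemma entropy_cfc (hA : A.IsHermitian) (f : ℝ → ℝ) :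
    entropy (cfc f A) = ∑ i, Real.negMulLog (f (hA.eigenvalues i)) := by
  have hlog : mlog (cfc f A) = cfc (fun x => Real.log (f x)) A := by
    rw [mlog, matfun_eq_cfc (cfc_predicate f A),
      cfc_comp' Real.log f A ((A.finite_real_spectrum.image f).continuousOn _)
        (continuousOn_spectrum _ _)]
  rw [entropy, hlog, ← cfc_mul f _ A (continuousOn_spectrum _ _) (continuousOn_spectrum _ _),
    trace_cfc hA, ← Complex.ofReal_sum, Complex.ofReal_re, ← Finset.sum_neg_distrib]
  simp only [Real.negMulLog, neg_mul]

lemma gibbs_eq_cfc (hA : A.IsHermitian) (β : ℝ) :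
    gibbs β A =
      cfc (fun x => Real.exp (-β * x) / Boltzmann.partitionFunction hA.eigenvalues β) A := by
  have hmexp : mexp β A = cfc (fun x => Real.exp (-β * x)) A := matfun_eq_cfc hA _
  have htrace : (mexp β A).trace = (Boltzmann.partitionFunction hA.eigenvalues β : ℂ) := by
    rw [hmexp, trace_cfc hA, Boltzmann.partitionFunction, Complex.ofReal_sum]
  simp_rw [div_eq_inv_mul]
  rw [cfc_const_mul _ _ A (continuousOn_spectrum _ _), gibbs, htrace, ← hmexp,
    ← Complex.ofReal_inv, Complex.coe_smul]

lemma entropy_gibbs (hA : A.IsHermitian) (β : ℝ) :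
    entropy (gibbs β A) = Boltzmann.shannonEntropy hA.eigenvalues β := by
  rw [gibbs_eq_cfc hA, entropy_cfc hA]
  rfl

lemma trace_mul_gibbs (hA : A.IsHermitian) (β : ℝ) :
    (A * gibbs β A).trace = (Boltzmann.meanEnergy hA.eigenvalues β : ℂ) := by
  have hmul : A * gibbs β A = cfc (fun x => x * (Real.exp (-β * x) /
      Boltzmann.partitionFunction hA.eigenvalues β)) A := by
    rw [cfc_mul _ _ A (continuousOn_spectrum _ _) (continuousOn_spectrum _ _),
      cfc_id' ℝ A hA.isSelfAdjoint, gibbs_eq_cfc hA]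
  rw [hmul, trace_cfc hA, Boltzmann.meanEnergy, Complex.ofReal_sum]
  simp only [Boltzmann.prob, mul_comm]

lemma thermalVar_eq_energyVariance {d : ℕ} {H : Matrix (Fin d) (Fin d) ℂ} (hH : H.IsHermitian)
    (β : ℝ) : thermalVar H β = Boltzmann.energyVariance hH.eigenvalues β := by
  set U := Boltzmann.meanEnergy hH.eigenvalues β
  have hcentered : H - (H * gibbs β H).trace • (1 : Matrix (Fin d) (Fin d) ℂ) =
      cfc (fun x => x - U) H := by
    rw [cfc_sub _ _ H (continuousOn_spectrum _ _) (continuousOn_spectrum _ _),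
      cfc_id' ℝ H hH.isSelfAdjoint, cfc_const U H hH.isSelfAdjoint, trace_mul_gibbs hH,
      Algebra.algebraMap_eq_smul_one, Complex.coe_smul]
  rw [thermalVar, hcentered, gibbs_eq_cfc hH,
    ← cfc_pow _ 2 H (continuousOn_spectrum _ _) hH.isSelfAdjoint,
    ← cfc_mul _ _ H (continuousOn_spectrum _ _) (continuousOn_spectrum _ _), trace_cfc hH,
    ← Complex.ofReal_sum, Complex.ofReal_re]
  rfl

end IsHermitian

end Matrix

theorem thermal_entropy_deriv {d : ℕ}
    (H : Matrix (Fin d) (Fin d) ℂ) (hH : H.IsHermitian) (β : ℝ) :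
    HasDerivAt (fun b => entropy (gibbs b H)) (-β * thermalVar H β) β := by
  simp only [hH.entropy_gibbs, hH.thermalVar_eq_energyVariance]
  exact Boltzmann.hasDerivAt_shannonEntropy hH.eigenvalues β
end

section
/- Telescoping heat formula for stepwise swap processes: let ρ_0, ρ_1, ..., ρ_k be full-rank states on C^r, let the reservoir be R = (C^r)^{⊗k} with Hamiltonian H = Σ_i H_i where H_i = −log ρ_i acts on the i-th factor (so at β = 1 the initial reservoir state is ρ_R = ρ_1 ⊗ ... ⊗ ρ_k), and let U be the composition of successive swaps of the system (initially in state ρ_0) with reservoir subsystems 1, ..., k. Then β·ΔQ = Σ_{i=1}^k tr[(ρ_i − ρ_{i−1}) log ρ_i] = [S(ρ_0) − S(ρ_k)] + Σ_{i=1}^k D(ρ_{i−1}‖ρ_i). -/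
open scoped Kronecker ComplexOrder
open Matrix

noncomputable def kpow {k r : ℕ} (σ : Fin k → Matrix (Fin r) (Fin r) ℂ) :
    Matrix (Fin k → Fin r) (Fin k → Fin r) ℂ :=
  Matrix.of fun f g => ∏ i, σ i (f i) (g i)

noncomputable def embed {k r : ℕ} (i : Fin k) (A : Matrix (Fin r) (Fin r) ℂ) :
    Matrix (Fin k → Fin r) (Fin k → Fin r) ℂ :=
  kpow (fun j => if j = i then A else 1)

/-!
Every factor of the product states `kpow` has trace one, so the energy change under a single-site
Hamiltonian only sees that site, and the heat splits into one term `tr[(ρ_i − ρ_{i−1}) log ρ_i]` per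
swap. Expanding `entropy` and `relEnt` turns each term into `S(ρ_{i−1}) − S(ρ_i) + D(ρ_{i−1}‖ρ_i)`,
and the entropy differences telescope.
-/

lemma Fin.sum_castSucc_sub_succ {M : Type*} [AddCommGroup M] :
    ∀ {k : ℕ} (f : Fin (k + 1) → M), ∑ i : Fin k, (f i.castSucc - f i.succ) = f 0 - f (Fin.last k)
  | 0, f => by simp
  | k + 1, f => by
    rw [Fin.sum_univ_castSucc]
    simp only [Fin.succ_castSucc, Fin.sum_castSucc_sub_succ fun i => f i.castSucc]
    simp

section TensorPower

variable {k r : ℕ}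

lemma kpow_mul (σ τ : Fin k → Matrix (Fin r) (Fin r) ℂ) :
    kpow σ * kpow τ = kpow fun i => σ i * τ i := by
  ext f g
  simp only [kpow, mul_apply, of_apply, ← Finset.prod_mul_distrib]
  rw [Finset.prod_univ_sum, Fintype.piFinset_univ]

lemma trace_kpow (σ : Fin k → Matrix (Fin r) (Fin r) ℂ) :
    (kpow σ).trace = ∏ i, (σ i).trace := by
  simp only [trace, diag, kpow, of_apply]
  rw [Finset.prod_univ_sum, Fintype.piFinset_univ]

lemma trace_embed_mul_kpow (i : Fin k) (A : Matrix (Fin r) (Fin r) ℂ)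
    {σ : Fin k → Matrix (Fin r) (Fin r) ℂ} (hσ : ∀ j, (σ j).trace = 1) :
    (embed i A * kpow σ).trace = (A * σ i).trace := by
  rw [embed, kpow_mul, trace_kpow, Finset.prod_eq_single i]
  · simp
  · intro j _ hj
    simp [hj, hσ]
  · simp

lemma trace_sum_embed_mul_kpow_sub_kpow (A : Fin k → Matrix (Fin r) (Fin r) ℂ)
    {σ τ : Fin k → Matrix (Fin r) (Fin r) ℂ} (hσ : ∀ j, (σ j).trace = 1)
    (hτ : ∀ j, (τ j).trace = 1) :
    ((∑ i, embed i (A i)) * (kpow σ - kpow τ)).trace = ∑ i, (A i * (σ i - τ i)).trace := by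
  simp only [Finset.sum_mul, trace_sum, mul_sub, trace_sub, trace_embed_mul_kpow _ _ hσ,
    trace_embed_mul_kpow _ _ hτ, Finset.sum_sub_distrib]

end TensorPower

lemma re_trace_sub_mul_mlog {n : Type*} [Fintype n] [DecidableEq n] (σ τ : Matrix n n ℂ) :
    ((τ - σ) * mlog τ).trace.re = entropy σ - entropy τ + relEnt σ τ := by
  simp only [entropy, relEnt, sub_mul, mul_sub, trace_sub, Complex.sub_re]
  ring

theorem stepwise_swap_heat_general {k r : ℕ}
    (ρ : Fin (k + 1) → Matrix (Fin r) (Fin r) ℂ)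
    (hρ : ∀ i, IsState (ρ i)) :
    let H := ∑ i : Fin k, embed i (-(mlog (ρ i.succ)))
    let ρR := kpow (fun i : Fin k => ρ i.succ)
    let ρR' := kpow (fun i : Fin k => ρ i.castSucc)
    let ΔQ := ((H * (ρR' - ρR)).trace).re
    (1 : ℝ) * ΔQ = ∑ i : Fin k, (((ρ i.succ - ρ i.castSucc) * mlog (ρ i.succ)).trace).re ∧
    (1 : ℝ) * ΔQ = (entropy (ρ 0) - entropy (ρ (Fin.last k))) +
      ∑ i : Fin k, relEnt (ρ i.castSucc) (ρ i.succ) := by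
  intro H ρR ρR' ΔQ
  have heat : ΔQ = ∑ i : Fin k, (((ρ i.succ - ρ i.castSucc) * mlog (ρ i.succ)).trace).re := by
    simp only [ΔQ, H, ρR, ρR', trace_sum_embed_mul_kpow_sub_kpow _ (fun _ => (hρ _).2)
      (fun _ => (hρ _).2), Complex.re_sum]
    refine Finset.sum_congr rfl fun i _ => ?_
    rw [trace_mul_comm, mul_neg, ← neg_mul, neg_sub]
  refine ⟨by rw [one_mul, heat], ?_⟩
  rw [one_mul, heat]
  simp only [re_trace_sub_mul_mlog, Finset.sum_add_distrib,
    Fin.sum_castSucc_sub_succ fun i => entropy (ρ i)]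

theorem stepwise_swap_heat {k r : ℕ}
    (ρ : Fin (k + 1) → Matrix (Fin r) (Fin r) ℂ)
    (hρ : ∀ i, IsState (ρ i)) (hfull : ∀ i, (ρ i).PosDef) :
    let H := ∑ i : Fin k, embed i (-(mlog (ρ i.succ)))
    let ρR := kpow (fun i : Fin k => ρ i.succ)
    let ρR' := kpow (fun i : Fin k => ρ i.castSucc)
    let ΔQ := ((H * (ρR' - ρR)).trace).re
    (1 : ℝ) * ΔQ = ∑ i : Fin k, (((ρ i.succ - ρ i.castSucc) * mlog (ρ i.succ)).trace).re ∧
    (1 : ℝ) * ΔQ = (entropy (ρ 0) - entropy (ρ (Fin.last k))) +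
      ∑ i : Fin k, relEnt (ρ i.castSucc) (ρ i.succ) :=
  stepwise_swap_heat_general ρ hρ
end

section
/- For the linear interpolation ρ_i = (1 − i/k)ρ_0 + (i/k)ρ', i = 0,...,k, between full-rank states ρ_0 and ρ' on C^r, the symmetrized sum of successive relative entropies telescopes: Σ_{i=1}^k [D(ρ_{i−1}‖ρ_i) + D(ρ_i‖ρ_{i−1})] = (1/k)·[D(ρ_0‖ρ') + D(ρ'‖ρ_0)]. In particular Σ_{i=1}^k D(ρ_{i−1}‖ρ_i) ≤ (1/k)[D(ρ_0‖ρ') + D(ρ'‖ρ_0)] → 0 as k → ∞. -/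
/-!
Consecutive interpolation points differ by the constant matrix `(ρ₀ - ρ') / k`, and
`D(σ‖τ) + D(τ‖σ) = tr[(σ - τ)(log σ - log τ)]`, so the symmetrized sum telescopes in the
logarithms. The inequality then only needs `D(ρᵢ₊₁‖ρᵢ) ≥ 0`, which is Klein's inequality: in
eigenbases `σ = Σ pᵢ uᵢuᵢ*`, `τ = Σ qⱼ vⱼvⱼ*` it reduces to the scalar bound
`p log p - p log q ≥ p - q`, averaged against the doubly stochastic matrix `|⟨vⱼ, uᵢ⟩|²`.
-/

open scoped Kronecker ComplexOrder
open Matrix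

lemma sub_le_mul_log_sub_mul_log {p q : ℝ} (hp : 0 ≤ p) (hq : 0 < q) :
    p - q ≤ p * Real.log p - p * Real.log q := by
  rcases hp.eq_or_lt with rfl | hp
  · simpa using hq.le
  · have h := mul_le_mul_of_nonneg_left (Real.log_le_sub_one_of_pos (div_pos hq hp)) hp.le
    rw [Real.log_div hq.ne' hp.ne', mul_sub, mul_sub, mul_div_cancel₀ _ hp.ne'] at h
    linarith

lemma sum_sub_sum_le_of_doublyStochastic {n : Type*} [Fintype n] {c : n → n → ℝ}
    (hc : ∀ i j, 0 ≤ c i j) (hrow : ∀ i, ∑ j, c i j = 1) (hcol : ∀ j, ∑ i, c i j = 1)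
    {p q : n → ℝ} (hp : ∀ i, 0 ≤ p i) (hq : ∀ j, 0 < q j) :
    ∑ i, p i - ∑ j, q j ≤
      ∑ i, p i * Real.log (p i) - ∑ i, ∑ j, p i * Real.log (q j) * c i j := by
  have hrow_sum (f : n → ℝ) : ∑ i, f i = ∑ i, ∑ j, c i j * f i := by
    simp [← Finset.sum_mul, hrow]
  have hcol_sum : ∑ j, q j = ∑ i, ∑ j, c i j * q j := by
    rw [Finset.sum_comm]
    simp [← Finset.sum_mul, hcol]
  calc ∑ i, p i - ∑ j, q j = ∑ i, ∑ j, c i j * (p i - q j) := by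
        simp only [hrow_sum p, hcol_sum, mul_sub, Finset.sum_sub_distrib]
    _ ≤ ∑ i, ∑ j, c i j * (p i * Real.log (p i) - p i * Real.log (q j)) :=
        Finset.sum_le_sum fun i _ => Finset.sum_le_sum fun j _ =>
          mul_le_mul_of_nonneg_left (sub_le_mul_log_sub_mul_log (hp i) (hq j)) (hc i j)
    _ = _ := by
        rw [hrow_sum fun i => p i * Real.log (p i), ← Finset.sum_sub_distrib]
        refine Finset.sum_congr rfl fun i _ => ?_
        rw [← Finset.sum_sub_distrib]
        exact Finset.sum_congr rfl fun j _ => by ring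

lemma Matrix.PosSemidef.one_sub_smul_add_smul {n : Type*} {A B : Matrix n n ℂ}
    (hA : A.PosSemidef) (hB : B.PosSemidef) {t : ℝ} (ht₀ : 0 ≤ t) (ht₁ : t ≤ 1) :
    (((1 - t : ℝ) : ℂ) • A + (t : ℂ) • B).PosSemidef :=
  (hA.smul (Complex.zero_le_real.mpr (sub_nonneg.mpr ht₁))).add
    (hB.smul (Complex.zero_le_real.mpr ht₀))

lemma Matrix.PosDef.one_sub_smul_add_smul {n : Type*} {A B : Matrix n n ℂ} (hA : A.PosDef)
    (hB : B.PosSemidef) {t : ℝ} (ht₀ : 0 ≤ t) (ht₁ : t < 1) :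
    (((1 - t : ℝ) : ℂ) • A + (t : ℂ) • B).PosDef :=
  (hA.smul (Complex.zero_lt_real.mpr (sub_pos.mpr ht₁))).add_posSemidef
    (hB.smul (Complex.zero_le_real.mpr ht₀))

section Klein

variable {n : Type*} [Fintype n] [DecidableEq n]

lemma matfun_of_isHermitian (f : ℝ → ℝ) {A : Matrix n n ℂ} (hA : A.IsHermitian) :
    matfun f A = (hA.eigenvectorUnitary : Matrix n n ℂ) *
      diagonal (fun i => (f (hA.eigenvalues i) : ℂ)) *
      star (hA.eigenvectorUnitary : Matrix n n ℂ) :=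
  dif_pos hA

lemma sum_norm_sq_col_eq_one {M : Matrix n n ℂ} (hM : M ∈ unitaryGroup n ℂ) (i : n) :
    ∑ j, ‖M j i‖ ^ 2 = 1 := by
  have h := congrFun₂ (mem_unitaryGroup_iff'.mp hM) i i
  simp only [mul_apply, star_apply, RCLike.star_def, Complex.conj_mul', one_apply_eq] at h
  exact_mod_cast h

lemma sum_norm_sq_row_eq_one {M : Matrix n n ℂ} (hM : M ∈ unitaryGroup n ℂ) (j : n) :
    ∑ i, ‖M j i‖ ^ 2 = 1 := by
  have h := congrFun₂ (mem_unitaryGroup_iff.mp hM) j j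
  simp only [mul_apply, star_apply, RCLike.star_def, Complex.mul_conj', one_apply_eq] at h
  exact_mod_cast h

lemma trace_unitary_conj_mul_unitary_conj (U V : unitaryGroup n ℂ) (d e : n → ℂ) :
    ((U : Matrix n n ℂ) * diagonal d * star (U : Matrix n n ℂ) *
      ((V : Matrix n n ℂ) * diagonal e * star (V : Matrix n n ℂ))).trace =
      ∑ i, ∑ j, d i * e j * ‖(star (V : Matrix n n ℂ) * U) j i‖ ^ 2 := by
  set M : Matrix n n ℂ := star (V : Matrix n n ℂ) * U
  have hcycle : ((U : Matrix n n ℂ) * diagonal d * star (U : Matrix n n ℂ) *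
      ((V : Matrix n n ℂ) * diagonal e * star (V : Matrix n n ℂ))).trace =
      (diagonal d * (star M * (diagonal e * M))).trace := by
    rw [Matrix.mul_assoc, Matrix.mul_assoc, trace_mul_comm]
    simp only [M, star_mul, star_star, Matrix.mul_assoc]
  rw [hcycle, trace]
  refine Finset.sum_congr rfl fun i _ => ?_
  rw [diag, diagonal_mul, mul_apply, Finset.mul_sum]
  refine Finset.sum_congr rfl fun j _ => ?_
  rw [diagonal_mul, star_apply, RCLike.star_def, ← Complex.conj_mul']
  ring

lemma trace_unitary_conj_mul_unitary_conj_self (U : unitaryGroup n ℂ) (d e : n → ℂ) :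
    ((U : Matrix n n ℂ) * diagonal d * star (U : Matrix n n ℂ) *
      ((U : Matrix n n ℂ) * diagonal e * star (U : Matrix n n ℂ))).trace = ∑ i, d i * e i := by
  simp [trace_unitary_conj_mul_unitary_conj, one_apply, apply_ite]

theorem re_trace_sub_le_relEnt {σ ρ : Matrix n n ℂ} (hσ : σ.PosSemidef) (hρ : ρ.PosDef) :
    (σ.trace - ρ.trace).re ≤ relEnt σ ρ := by
  have hσ_eq : σ = (hσ.isHermitian.eigenvectorUnitary : Matrix n n ℂ) *
      diagonal (fun i => (hσ.isHermitian.eigenvalues i : ℂ)) *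
      star (hσ.isHermitian.eigenvectorUnitary : Matrix n n ℂ) :=
    hσ.isHermitian.spectral_theorem
  rw [relEnt, mlog, mlog, matfun_of_isHermitian _ hσ.isHermitian,
    matfun_of_isHermitian _ hρ.isHermitian, mul_sub, trace_sub,
    hσ.isHermitian.trace_eq_sum_eigenvalues, hρ.isHermitian.trace_eq_sum_eigenvalues]
  set U := hσ.isHermitian.eigenvectorUnitary
  set V := hρ.isHermitian.eigenvectorUnitary
  set p := hσ.isHermitian.eigenvalues
  rw [hσ_eq, trace_unitary_conj_mul_unitary_conj_self, trace_unitary_conj_mul_unitary_conj]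
  have hM : star (V : Matrix n n ℂ) * U ∈ unitaryGroup n ℂ := mul_mem (Unitary.star_mem V.2) U.2
  have hscalar := sum_sub_sum_le_of_doublyStochastic (fun _ _ => sq_nonneg _)
    (sum_norm_sq_col_eq_one hM) (sum_norm_sq_row_eq_one hM) hσ.eigenvalues_nonneg
    hρ.eigenvalues_pos
  simpa [← Complex.ofReal_pow] using hscalar

end Klein

section Telescope

variable {n : Type*} [Fintype n] [DecidableEq n]

theorem relEnt_nonneg {σ ρ : Matrix n n ℂ} (hσ : σ.PosSemidef) (hρ : ρ.PosDef)
    (htr : σ.trace = ρ.trace) : 0 ≤ relEnt σ ρ := by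
  simpa [htr] using re_trace_sub_le_relEnt hσ hρ

lemma relEnt_add_relEnt_swap (σ ρ : Matrix n n ℂ) :
    relEnt σ ρ + relEnt ρ σ = (((σ - ρ) * (mlog σ - mlog ρ)).trace).re := by
  simp only [relEnt, sub_mul, mul_sub, trace_sub, Complex.sub_re]
  ring

lemma sum_relEnt_add_relEnt_swap_of_sub_succ_eq {ρ : ℕ → Matrix n n ℂ} {Δ : Matrix n n ℂ}
    (hΔ : ∀ i, ρ i - ρ (i + 1) = Δ) (k : ℕ) :
    ∑ i ∈ Finset.range k, (relEnt (ρ i) (ρ (i + 1)) + relEnt (ρ (i + 1)) (ρ i)) =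
      ((Δ * (mlog (ρ 0) - mlog (ρ k))).trace).re := by
  simp only [relEnt_add_relEnt_swap, hΔ, mul_sub, trace_sub, Complex.sub_re]
  exact Finset.sum_range_sub' (fun i => ((Δ * mlog (ρ i)).trace).re) k

end Telescope

theorem interpolation_telescope_general {r k : ℕ} (hk : 0 < k)
    (ρ0 ρ' : Matrix (Fin r) (Fin r) ℂ)
    (h0 : IsState ρ0) (h0full : ρ0.PosDef)
    (h1 : IsState ρ') :
    let ρ : ℕ → Matrix (Fin r) (Fin r) ℂ := fun i =>
      (((1 - (i : ℝ) / k : ℝ)) : ℂ) • ρ0 + ((((i : ℝ) / k : ℝ)) : ℂ) • ρ'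
    (∑ i ∈ Finset.range k, (relEnt (ρ i) (ρ (i + 1)) + relEnt (ρ (i + 1)) (ρ i))
        = (1 / k : ℝ) * (relEnt ρ0 ρ' + relEnt ρ' ρ0)) ∧
      ∑ i ∈ Finset.range k, relEnt (ρ i) (ρ (i + 1)) ≤
        (1 / k : ℝ) * (relEnt ρ0 ρ' + relEnt ρ' ρ0) := by
  intro ρ
  have hk_pos : (0 : ℝ) < k := by positivity
  have hstep (i : ℕ) : ρ i - ρ (i + 1) = ((1 / k : ℝ) : ℂ) • (ρ0 - ρ') := by
    simp only [ρ, smul_sub]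
    match_scalars <;> field_simp <;> ring
  have hsum : ∑ i ∈ Finset.range k, (relEnt (ρ i) (ρ (i + 1)) + relEnt (ρ (i + 1)) (ρ i))
      = (1 / k : ℝ) * (relEnt ρ0 ρ' + relEnt ρ' ρ0) := by
    have hρ0 : ρ 0 = ρ0 := by simp [ρ]
    have hρk : ρ k = ρ' := by simp only [ρ, div_self hk_pos.ne', sub_self]; simp
    rw [sum_relEnt_add_relEnt_swap_of_sub_succ_eq hstep, hρ0, hρk, relEnt_add_relEnt_swap,
      smul_mul, trace_smul, smul_eq_mul, Complex.re_ofReal_mul]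
  refine ⟨hsum, hsum ▸ Finset.sum_le_sum fun i hi => le_add_of_nonneg_right ?_⟩
  have hi_lt : (i : ℝ) / k < 1 := by
    rw [div_lt_one hk_pos]; exact_mod_cast Finset.mem_range.mp hi
  have hi_le : ((i + 1 : ℕ) : ℝ) / k ≤ 1 := by
    rw [div_le_one hk_pos]; exact_mod_cast Finset.mem_range.mp hi
  have htr : (ρ (i + 1)).trace = (ρ i).trace := by
    have h := congrArg trace (hstep i)
    rw [trace_sub, trace_smul, trace_sub, h0.2, h1.2, sub_self, smul_zero, sub_eq_zero] at h
    exact h.symm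
  exact relEnt_nonneg (h0full.posSemidef.one_sub_smul_add_smul h1.1 (by positivity) hi_le)
    (h0full.one_sub_smul_add_smul h1.1 (by positivity) hi_lt) htr

theorem interpolation_telescope {r k : ℕ} (hk : 0 < k)
    (ρ0 ρ' : Matrix (Fin r) (Fin r) ℂ)
    (h0 : IsState ρ0) (h0full : ρ0.PosDef)
    (h1 : IsState ρ') (h1full : ρ'.PosDef) :
    let ρ : ℕ → Matrix (Fin r) (Fin r) ℂ := fun i =>
      (((1 - (i : ℝ) / k : ℝ)) : ℂ) • ρ0 + ((((i : ℝ) / k : ℝ)) : ℂ) • ρ'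
    (∑ i ∈ Finset.range k, (relEnt (ρ i) (ρ (i + 1)) + relEnt (ρ (i + 1)) (ρ i))
        = (1 / k : ℝ) * (relEnt ρ0 ρ' + relEnt ρ' ρ0)) ∧
      ∑ i ∈ Finset.range k, relEnt (ρ i) (ρ (i + 1)) ≤
        (1 / k : ℝ) * (relEnt ρ0 ρ' + relEnt ρ' ρ0) :=
  interpolation_telescope_general hk ρ0 ρ' h0 h0full h1
end

section
/- Violation of a mutual-information Landauer bound: there exist finite-dimensional systems S, M, R, a state ρ_{SM} with I(S:M) > 0, a full-rank reservoir state ρ_R equal to ρ_S = tr_M ρ_{SM} (thermal for H = −log ρ_R at β = 1), and a unitary U_SR (the swap of S and R) such that the process ρ'_{SRM} = (U_SR ⊗ 1_M)(ρ_{SM} ⊗ ρ_R)(U_SR ⊗ 1_M)† satisfies ΔI := I(S:M) − I(S':M') = I(S:M) > 0 while β·ΔQ = tr[H(ρ'_R − ρ_R)] = 0; hence β·ΔQ ≥ ΔI fails in general. -/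
open scoped Kronecker ComplexOrder
open Matrix

/-!
Swapping S with a reservoir R prepared in the state ρ_S leaves the reservoir's marginal
unchanged, so no heat is exchanged, while the new S' is a copy of R and hence uncorrelated
with M: all the mutual information is lost. Taking ρ_SM maximally classically correlated on
two qubits, every state involved is diagonal, so its von Neumann entropy is the Shannon
entropy of its diagonal: I(S:M) = log 2, and ρ'_{S'M'} is a product of uniform distributions.
-/

open Real

section Spectral
variable {n : Type*} [Fintype n] [DecidableEq n]

lemma trace_conjStarAlgAut (u : unitary (Matrix n n ℂ)) (X : Matrix n n ℂ) :
    (Unitary.conjStarAlgAut ℂ _ u X).trace = X.trace := by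
  rw [Unitary.conjStarAlgAut_apply, trace_mul_cycle, Unitary.coe_star_mul_self, Matrix.one_mul]

lemma trace_mul_matfun (f : ℝ → ℝ) {A : Matrix n n ℂ} (hA : A.IsHermitian) :
    (A * matfun f A).trace = ∑ i, ((hA.eigenvalues i * f (hA.eigenvalues i) : ℝ) : ℂ) := by
  have hf : matfun f A = Unitary.conjStarAlgAut ℂ _ hA.eigenvectorUnitary
      (diagonal fun i => (f (hA.eigenvalues i) : ℂ)) := by
    rw [matfun, dif_pos hA, Unitary.conjStarAlgAut_apply]
  rw [hf]
  nth_rewrite 1 [hA.spectral_theorem]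
  rw [← map_mul, trace_conjStarAlgAut, diagonal_mul_diagonal, trace_diagonal]
  simp

-- `eigenvalues` is read off a chosen eigenbasis, so it matches `d` only up to order.
lemma map_eigenvalues_diagonal (d : n → ℝ) (hA : (diagonal fun i => (d i : ℂ)).IsHermitian) :
    Finset.univ.val.map hA.eigenvalues = Finset.univ.val.map d := by
  have hd : (diagonal fun i => (d i : ℂ)).charpoly.roots =
      Finset.univ.val.map (RCLike.ofReal ∘ d) := by
    rw [charpoly_diagonal, Polynomial.roots_prod]
    · simp
    · simp [Finset.prod_ne_zero_iff, Polynomial.X_sub_C_ne_zero]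
  rw [hA.roots_charpoly_eq_eigenvalues, ← Multiset.map_map, ← Multiset.map_map] at hd
  exact Multiset.map_injective RCLike.ofReal_injective hd

lemma sum_eigenvalues_diagonal (g : ℝ → ℝ) (d : n → ℝ)
    (hA : (diagonal fun i => (d i : ℂ)).IsHermitian) :
    ∑ i, g (hA.eigenvalues i) = ∑ i, g (d i) := by
  have h := congrArg (Multiset.map g) (map_eigenvalues_diagonal d hA)
  simp only [Multiset.map_map] at h
  exact congrArg Multiset.sum h

end Spectral

section DiagState
variable {ι κ : Type*} [DecidableEq ι] [DecidableEq κ]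

def diagState (p : ι → ℝ) : Matrix ι ι ℂ := diagonal fun i => (p i : ℂ)

lemma diagState_kronecker_diagState (a : ι → ℝ) (b : κ → ℝ) :
    diagState a ⊗ₖ diagState b = diagState fun q => a q.1 * b q.2 := by
  simp only [diagState, diagonal_kronecker_diagonal, Complex.ofReal_mul]

lemma isHermitian_diagState (p : ι → ℝ) : (diagState p).IsHermitian :=
  isHermitian_diagonal_iff.mpr fun i => by simp [isSelfAdjoint_iff]

lemma posDef_diagState {p : ι → ℝ} (h : ∀ i, 0 < p i) : (diagState p).PosDef :=
  posDef_diagonal_iff.mpr fun i => Complex.zero_lt_real.mpr (h i)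

variable [Fintype ι] [Fintype κ]

lemma trace_diagState (p : ι → ℝ) : (diagState p).trace = ((∑ i, p i : ℝ) : ℂ) := by
  simp [diagState, trace_diagonal]

lemma isState_diagState {p : ι → ℝ} (h0 : ∀ i, 0 ≤ p i) (h1 : ∑ i, p i = 1) :
    IsState (diagState p) :=
  ⟨posSemidef_diagonal_iff.mpr fun i => Complex.zero_le_real.mpr (h0 i), by
    rw [trace_diagState, h1, Complex.ofReal_one]⟩

lemma trR_diagState (p : ι × κ → ℝ) : trR (diagState p) = diagState fun i => ∑ k, p (i, k) := by
  ext i j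
  by_cases h : i = j <;> simp [trR, diagState, h]

lemma trL_diagState (p : ι × κ → ℝ) : trL (diagState p) = diagState fun k => ∑ i, p (i, k) := by
  ext i j
  by_cases h : i = j <;> simp [trL, diagState, h]

lemma entropy_diagState (p : ι → ℝ) : entropy (diagState p) = ∑ i, negMulLog (p i) := by
  rw [entropy, mlog, trace_mul_matfun _ (isHermitian_diagState p), ← Complex.ofReal_sum,
    Complex.ofReal_re, ← Finset.sum_neg_distrib]
  simp only [← neg_mul]
  exact sum_eigenvalues_diagonal negMulLog p _

end DiagState

section Kronecker
variable {α β : Type*} [Fintype α] [Fintype β]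

lemma trR_kronecker (A : Matrix α α ℂ) (B : Matrix β β ℂ) : trR (A ⊗ₖ B) = B.trace • A := by
  ext i j
  simp [trR, trace, Finset.mul_sum, mul_comm]

lemma trL_kronecker (A : Matrix α α ℂ) (B : Matrix β β ℂ) : trL (A ⊗ₖ B) = A.trace • B := by
  ext i j
  simp [trL, trace, Finset.sum_mul]

lemma sum_negMulLog_mul {a : α → ℝ} {b : β → ℝ} (ha : ∑ i, a i = 1) (hb : ∑ j, b j = 1) :
    ∑ q : α × β, negMulLog (a q.1 * b q.2) = ∑ i, negMulLog (a i) + ∑ j, negMulLog (b j) := by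
  simp only [negMulLog_mul, Fintype.sum_prod_type, Finset.sum_add_distrib, ← Finset.sum_mul,
    ← Finset.mul_sum, hb, ← Finset.sum_mul, ha, one_mul]

lemma mutInfo_diagState_kronecker [DecidableEq α] [DecidableEq β] {a : α → ℝ} {b : β → ℝ}
    (ha : ∑ i, a i = 1) (hb : ∑ j, b j = 1) : mutInfo (diagState a ⊗ₖ diagState b) = 0 := by
  rw [mutInfo, trR_kronecker, trL_kronecker, trace_diagState, trace_diagState, ha, hb,
    Complex.ofReal_one, one_smul, one_smul, diagState_kronecker_diagState, entropy_diagState,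
    entropy_diagState, entropy_diagState, sum_negMulLog_mul ha hb, sub_self]

end Kronecker

section Swap
variable {α β : Type*}

def swapSR (α β : Type*) : Equiv.Perm ((α × β) × α) where
  toFun p := ((p.2, p.1.2), p.1.1)
  invFun p := ((p.2, p.1.2), p.1.1)
  left_inv _ := rfl
  right_inv _ := rfl

lemma permMatrix_swapSR [DecidableEq α] [DecidableEq β] :
    (swapSR α β).permMatrix ℂ = Matrix.of fun p q =>
      if p.1.1 = q.2 ∧ p.2 = q.1.1 ∧ p.1.2 = q.1.2 then (1 : ℂ) else 0 := by
  ext p q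
  simp only [PEquiv.toMatrix_apply, Equiv.toPEquiv_apply, Option.mem_def, Option.some.injEq,
    swapSR, Equiv.coe_fn_mk, Prod.ext_iff, of_apply, and_comm]

lemma permMatrix_mul_mul_star {ι : Type*} [Fintype ι] [DecidableEq ι] (σ : Equiv.Perm ι)
    (X : Matrix ι ι ℂ) : σ.permMatrix ℂ * X * star (σ.permMatrix ℂ) = X.submatrix σ σ := by
  rw [star_eq_conjTranspose, conjTranspose_permMatrix, PEquiv.toMatrix_toPEquiv_mul,
    PEquiv.mul_toMatrix_toPEquiv, submatrix_submatrix]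
  rfl

variable [Fintype α] [Fintype β]

lemma trL_submatrix_swapSR (A : Matrix (α × β) (α × β) ℂ) (B : Matrix α α ℂ) :
    trL ((A ⊗ₖ B).submatrix (swapSR α β) (swapSR α β)) = B.trace • trR A := by
  ext r r'
  simp only [trL, trR, trace, submatrix_apply, kroneckerMap_apply, swapSR, Equiv.coe_fn_mk,
    of_apply, Matrix.smul_apply, smul_eq_mul, Fintype.sum_prod_type, diag, Finset.sum_mul_sum, mul_comm]

lemma trR_submatrix_swapSR (A : Matrix (α × β) (α × β) ℂ) (B : Matrix α α ℂ) :
    trR ((A ⊗ₖ B).submatrix (swapSR α β) (swapSR α β)) = B ⊗ₖ trL A := by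
  ext p q
  simp only [trL, trR, submatrix_apply, kroneckerMap_apply, swapSR, Equiv.coe_fn_mk,
    of_apply, Finset.mul_sum, mul_comm]

end Swap

section Correlated
variable (ι : Type*) [Fintype ι]

noncomputable def uniformDist : ι → ℝ := fun _ => (Fintype.card ι : ℝ)⁻¹

lemma uniformDist_pos [Nonempty ι] (i : ι) : 0 < uniformDist ι i := by
  simp [uniformDist, Fintype.card_pos]

lemma sum_uniformDist [Nonempty ι] : ∑ i, uniformDist ι i = 1 := by
  simp [uniformDist]

lemma sum_negMulLog_uniformDist [Nonempty ι] :
    ∑ i, negMulLog (uniformDist ι i) = log (Fintype.card ι) := by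
  simp only [uniformDist, negMulLog, Finset.sum_const, Finset.card_univ, nsmul_eq_mul, log_inv]
  field_simp

variable [DecidableEq ι]

noncomputable def correlatedDist : ι × ι → ℝ :=
  fun q => if q.1 = q.2 then (Fintype.card ι : ℝ)⁻¹ else 0

lemma correlatedDist_nonneg (q : ι × ι) : 0 ≤ correlatedDist ι q := by
  unfold correlatedDist
  split_ifs <;> positivity

lemma sum_correlatedDist [Nonempty ι] : ∑ q, correlatedDist ι q = 1 := by
  simp [correlatedDist, Fintype.sum_prod_type]

lemma trR_diagState_correlatedDist :
    trR (diagState (correlatedDist ι)) = diagState (uniformDist ι) := by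
  rw [trR_diagState]
  congr
  ext i
  simp [correlatedDist, uniformDist]

lemma trL_diagState_correlatedDist :
    trL (diagState (correlatedDist ι)) = diagState (uniformDist ι) := by
  rw [trL_diagState]
  congr
  ext i
  simp [correlatedDist, uniformDist]

lemma sum_negMulLog_correlatedDist :
    ∑ q, negMulLog (correlatedDist ι q) = ∑ i, negMulLog (uniformDist ι i) := by
  simp [correlatedDist, uniformDist, Fintype.sum_prod_type, apply_ite negMulLog]

lemma mutInfo_diagState_correlatedDist [Nonempty ι] :
    mutInfo (diagState (correlatedDist ι)) = log (Fintype.card ι) := by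
  rw [mutInfo, trR_diagState_correlatedDist, trL_diagState_correlatedDist, entropy_diagState,
    entropy_diagState, sum_negMulLog_correlatedDist, sum_negMulLog_uniformDist]
  ring

end Correlated

theorem mutual_info_landauer_violation :
    ∃ (dS dM : ℕ) (ρSM : Matrix (Fin dS × Fin dM) (Fin dS × Fin dM) ℂ),
      IsState ρSM ∧ (trR ρSM).PosDef ∧
      let ρR : Matrix (Fin dS) (Fin dS) ℂ := trR ρSM
      let H := -(mlog ρR)
      let U : Matrix ((Fin dS × Fin dM) × Fin dS) ((Fin dS × Fin dM) × Fin dS) ℂ :=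
        Matrix.of fun p q =>
          if p.1.1 = q.2 ∧ p.2 = q.1.1 ∧ p.1.2 = q.1.2 then (1 : ℂ) else 0
      let ρ' := U * (ρSM ⊗ₖ ρR) * star U
      0 < mutInfo ρSM ∧
        mutInfo (trR ρ') = 0 ∧
        mutInfo ρSM - mutInfo (trR ρ') = mutInfo ρSM ∧
        (1 : ℝ) * ((H * (trL ρ' - ρR)).trace).re = 0 := by
  refine ⟨2, 2, diagState (correlatedDist (Fin 2)), isState_diagState
    (correlatedDist_nonneg _) (sum_correlatedDist _), ?_, ?_⟩
  · rw [trR_diagState_correlatedDist]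
    exact posDef_diagState (uniformDist_pos _)
  intro ρR H U ρ'
  have hρR : ρR = diagState (uniformDist (Fin 2)) := trR_diagState_correlatedDist _
  have hρ' : ρ' =
      (diagState (correlatedDist (Fin 2)) ⊗ₖ ρR).submatrix (swapSR _ _) (swapSR _ _) := by
    rw [← permMatrix_mul_mul_star, permMatrix_swapSR]
  have hR : trL ρ' = ρR := by
    rw [hρ', trL_submatrix_swapSR, trR_diagState_correlatedDist, hρR, trace_diagState,
      sum_uniformDist, Complex.ofReal_one, one_smul]
  have hI : mutInfo (trR ρ') = 0 := by
    rw [hρ', trR_submatrix_swapSR, trL_diagState_correlatedDist, hρR]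
    exact mutInfo_diagState_kronecker (sum_uniformDist _) (sum_uniformDist _)
  refine ⟨?_, hI, by rw [hI, sub_zero], by simp [hR]⟩
  rw [mutInfo_diagState_correlatedDist]
  exact log_pos (by simp)
end
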